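/- In the Backup causal model with binary endogenous variables Trainee, Supervisor, Victim, equations Victim = Trainee ∨ Supervisor and Supervisor = ¬Trainee, and a context u in which Trainee=1, it holds that Trainee=0 NESS-causes Victim=1 w.r.t. (M_{Trainee←0},u), and consequently Trainee=1 does not BV-cause Victim=1 w.r.t. (M,u). -/
import Mathlib


/-!
Structural equation models (causal models) à la Pearl/Halpern, formalizing
Beckers' "The Counterfactual NESS Definition of Causation".

A causal model over a context type `Ctx` (settings of the exogenous variables),
endogenous variables `V` and values `Val` consists of finite nonempty ranges
`R X`, structural equations `F X`, and a strong-recursiveness (acyclicity)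
witness: an order `ord` such that `F X` only depends on variables of lower order.
-/

structure CausalModel (Ctx V Val : Type) where
  R : V → Finset Val
  R_nonempty : ∀ X, (R X).Nonempty
  F : V → Ctx → (V → Val) → Val
  ord : V → ℕ
  F_resp : ∀ X u s s', (∀ Y, ord Y < ord X → s Y = s' Y) → F X u s = F X u s'

namespace CausalModel

variable {Ctx V Val : Type}

/-- The unique solution of the equations in context `u` (it exists and is
unique by strong recursiveness). `(M,u) ⊨ X = x` iff `M.sol u X = x`. -/
noncomputable def sol (M : CausalModel Ctx V Val) (u : Ctx) : V → Val :=
  fun X =>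
    M.F X u (fun Y => if h : M.ord Y < M.ord X then M.sol u Y else (M.R_nonempty Y).choose)
termination_by X => M.ord X
decreasing_by exact h

/-- `M.sol u` indeed solves all the equations. -/
theorem sol_eq (M : CausalModel Ctx V Val) (u : Ctx) (X : V) :
    M.sol u X = M.F X u (M.sol u) := by
  rw [sol]
  exact M.F_resp X u _ _ (fun Y hY => dif_pos hY)

variable [DecidableEq V]

/-- `X⃗ = x⃗` (given by the set `Xs` and the assignment `xs`) is sufficient for
`E = e` w.r.t. `(M, u)`: the equation for `E` outputs `e` on every setting of the
endogenous variables (in their ranges) that agrees with `xs` on `Xs`. -/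
def Sufficient (M : CausalModel Ctx V Val) (u : Ctx) (Xs : Finset V) (xs : V → Val)
    (E : V) (e : Val) : Prop :=
  ∀ s : V → Val, (∀ Y, s Y ∈ M.R Y) → (∀ X ∈ Xs, s X = xs X) → M.F E u s = e

/-- The intervened model `M_{X⃗ ← x⃗}`: the equations of variables in `Xs` are
replaced by the constants given by `xs`. -/
def intervene (M : CausalModel Ctx V Val) (Xs : Finset V) (xs : V → Val) :
    CausalModel Ctx V Val where
  R := M.R
  R_nonempty := M.R_nonempty
  F := fun X u s => if X ∈ Xs then xs X else M.F X u s
  ord := M.ord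
  F_resp := by
    intro X u s s' h
    by_cases hX : X ∈ Xs
    · simp [hX]
    · simpa [hX] using M.F_resp X u s s' h

/-- `W⃗ = w⃗` (given by `Ws, ws`) is a witness for `C = c` directly NESS-causing
`E = e` w.r.t. `(M, u)`: `C = c` and `W⃗ = w⃗` actually hold, `{C = c} ∪ {W⃗ = w⃗}`
is sufficient for `E = e`, and `W⃗ = w⃗` alone is not. -/
def DirectNESSWith (M : CausalModel Ctx V Val) (u : Ctx) (C : V) (c : Val) (E : V) (e : Val)
    (Ws : Finset V) (ws : V → Val) : Prop :=
  M.sol u C = c ∧ (∀ W ∈ Ws, M.sol u W = ws W) ∧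
  M.Sufficient u (insert C Ws) (Function.update ws C c) E e ∧
  ¬ M.Sufficient u Ws ws E e

/-- `C = c` directly NESS-causes `E = e` w.r.t. `(M, u)`. -/
def DirectNESS (M : CausalModel Ctx V Val) (u : Ctx) (C : V) (c : Val) (E : V) (e : Val) :
    Prop :=
  ∃ (Ws : Finset V) (ws : V → Val), M.DirectNESSWith u C c E e Ws ws

/-- `C = c` NESS-causes `E = e` along the path `p = (C₁, …, Cₙ)` w.r.t. `(M, u)`:
there are values `c₁, …, cₙ` such that `C = c` directly NESS-causes `C₁ = c₁`, …,
and `Cₙ = cₙ` directly NESS-causes `E = e`. (A direct NESS-cause is a NESS-cause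
along the empty path.) -/
def NESSAlong (M : CausalModel Ctx V Val) (u : Ctx) (C : V) (c : Val) (p : List V)
    (E : V) (e : Val) : Prop :=
  ∃ cs : List Val, cs.length = p.length ∧
    List.Chain (fun a b => M.DirectNESS u a.1 a.2 b.1 b.2) (C, c) (p.zip cs ++ [(E, e)])

/-- `C = c` NESS-causes `E = e` w.r.t. `(M, u)`: there is a chain of direct
NESS-causes from `C = c` to `E = e`. -/
def NESS (M : CausalModel Ctx V Val) (u : Ctx) (C : V) (c : Val) (E : V) (e : Val) : Prop :=
  ∃ p : List V, M.NESSAlong u C c p E e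

/-- The BV definition: `C = c` NESS-causes `E = e` w.r.t. `(M, u)` and there is a
`c' ∈ R(C)` such that `C = c'` does not NESS-cause `E = e` w.r.t. `(M_{C ← c'}, u)`. -/
def BVCause (M : CausalModel Ctx V Val) (u : Ctx) (C : V) (c : Val) (E : V) (e : Val) :
    Prop :=
  M.NESS u C c E e ∧
    ∃ c' ∈ M.R C, ¬ (M.intervene {C} (fun _ => c')).NESS u C c' E e

/-- The CNESS definition: `C = c` NESS-causes `E = e` along some path `p` w.r.t.
`(M, u)` and there is a `c' ∈ R(C)` such that `C = c'` does not NESS-cause `E = e`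
along any subpath of `p` (a path all of whose variables are in `p`) w.r.t.
`(M_{C ← c'}, u)`. -/
def CNESSCause (M : CausalModel Ctx V Val) (u : Ctx) (C : V) (c : Val) (E : V) (e : Val) :
    Prop :=
  ∃ p : List V, M.NESSAlong u C c p E e ∧
    ∃ c' ∈ M.R C, ∀ p' : List V, (∀ X ∈ p', X ∈ p) →
      ¬ (M.intervene {C} (fun _ => c')).NESSAlong u C c' p' E e

/-- `E = e` is counterfactually dependent on `C = c` w.r.t. `(M, u)`:
`(M,u) ⊨ C = c ∧ E = e` and there is a `c' ∈ R(C)` with `(M,u) ⊨ [C ← c'] ¬(E = e)`. -/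
def CfDep (M : CausalModel Ctx V Val) (u : Ctx) (C : V) (c : Val) (E : V) (e : Val) : Prop :=
  M.sol u C = c ∧ M.sol u E = e ∧
    ∃ c' ∈ M.R C, (M.intervene {C} (fun _ => c')).sol u E ≠ e

/-- `E = e` is counterfactually dependent on `C = c` given the intervention
`X⃗ ← x⃗`: in `M_{X⃗ ← x⃗}` with context `u`, `C = c` and `E = e` hold, and there is
a `c' ∈ R(C)` such that additionally intervening with `C ← c'` makes `E = e` false. -/
def CfDepGiven (M : CausalModel Ctx V Val) (u : Ctx) (Xs : Finset V) (xs : V → Val)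
    (C : V) (c : Val) (E : V) (e : Val) : Prop :=
  (M.intervene Xs xs).sol u C = c ∧ (M.intervene Xs xs).sol u E = e ∧
    ∃ c' ∈ M.R C, ((M.intervene Xs xs).intervene {C} (fun _ => c')).sol u E ≠ e

/-- `Y` is a parent of `X`: the equation `F X` varies with the value of `Y`
for some context and some setting (within the ranges) of the other variables. -/
def Parent (M : CausalModel Ctx V Val) (Y X : V) : Prop :=
  ∃ (u : Ctx) (s : V → Val) (y y' : Val),
    (∀ Z, s Z ∈ M.R Z) ∧ y ∈ M.R Y ∧ y' ∈ M.R Y ∧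
    M.F X u (Function.update s Y y) ≠ M.F X u (Function.update s Y y')

end CausalModel
/-- Variables for the Backup model: Trainee, Supervisor, Victim. -/
inductive VB | Trainee | Supervisor | Victim
deriving DecidableEq

/-- The Backup model with equations `Victim = Trainee ∨ Supervisor` and
`Supervisor = ¬Trainee`, in a context where `Trainee = 1`. -/
def MB : CausalModel Unit VB Bool where
  R := fun _ => Finset.univ
  R_nonempty := fun _ => Finset.univ_nonempty
  F := fun X _ s =>
    match X with
    | .Trainee => true
    | .Supervisor => !(s .Trainee)
    | .Victim => s .Trainee || s .Supervisor
  ord := fun X => match X with | .Trainee => 0 | .Supervisor => 1 | .Victim => 2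
  F_resp := by
    intro X u s s' h
    cases X
    · rfl
    · show (!(s VB.Trainee)) = (!(s' VB.Trainee))
      rw [h VB.Trainee (by decide)]
    · show (s VB.Trainee || s VB.Supervisor) = (s' VB.Trainee || s' VB.Supervisor)
      rw [h VB.Trainee (by decide), h VB.Supervisor (by decide)]


section Aux

abbrev MBf : CausalModel Unit VB Bool := MB.intervene {VB.Trainee} (fun _ => false)
abbrev MBt : CausalModel Unit VB Bool := MB.intervene {VB.Trainee} (fun _ => true)

lemma MBf_sol_T : MBf.sol () VB.Trainee = false := by
  rw [CausalModel.sol_eq]; rfl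

lemma MBf_sol_S : MBf.sol () VB.Supervisor = true := by
  rw [CausalModel.sol_eq]
  show (!(MBf.sol () VB.Trainee)) = true
  rw [MBf_sol_T]; rfl

lemma MBt_sol_T : MBt.sol () VB.Trainee = true := by
  rw [CausalModel.sol_eq]; rfl

lemma ness_f : MBf.NESS () VB.Trainee false VB.Victim true := by
  refine ⟨[VB.Supervisor], [true], rfl, ?_⟩
  constructor
  · -- Trainee=false directly causes Supervisor=true
    refine ⟨∅, fun _ => true, MBf_sol_T, by simp, ?_, ?_⟩
    · intro s _ hs
      have h : s VB.Trainee = false := by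
        have := hs VB.Trainee (by simp)
        simpa [Function.update] using this
      show (!(s VB.Trainee)) = true
      rw [h]; rfl
    · intro h
      have := h (fun _ => true) (fun _ => Finset.mem_univ _) (by simp)
      simpa [CausalModel.intervene, MB] using this
  constructor
  · -- Supervisor=true directly causes Victim=true
    refine ⟨∅, fun _ => true, MBf_sol_S, by simp, ?_, ?_⟩
    · intro s _ hs
      have h : s VB.Supervisor = true := by
        have := hs VB.Supervisor (by simp)
        simpa [Function.update] using this
      show (s VB.Trainee || s VB.Supervisor) = true
      rw [h]; simp
    · intro h
      have := h (fun _ => false) (fun _ => Finset.mem_univ _) (by simp)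
      simpa [CausalModel.intervene, MB] using this
  exact List.Chain.nil

lemma ness_t : MBt.NESS () VB.Trainee true VB.Victim true := by
  refine ⟨[], [], rfl, ?_⟩
  constructor
  · refine ⟨∅, fun _ => true, MBt_sol_T, by simp, ?_, ?_⟩
    · intro s _ hs
      have h : s VB.Trainee = true := by
        have := hs VB.Trainee (by simp)
        simpa [Function.update] using this
      show (s VB.Trainee || s VB.Supervisor) = true
      rw [h]; simp
    · intro h
      have := h (fun _ => false) (fun _ => Finset.mem_univ _) (by simp)
      simpa [CausalModel.intervene, MB] using this
  exact List.Chain.nil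

end Aux

/-- In the Backup model (context with `Trainee = 1`),
`Trainee = 0` NESS-causes `Victim = 1` w.r.t. `(M_{Trainee ← 0}, u)`, and
consequently `Trainee = 1` does not BV-cause `Victim = 1` w.r.t. `(M, u)`. -/
theorem backup_not_bv :
    (MB.intervene {VB.Trainee} (fun _ => false)).NESS () VB.Trainee false VB.Victim true ∧
      ¬ MB.BVCause () VB.Trainee true VB.Victim true := by
  refine ⟨ness_f, ?_⟩
  rintro ⟨-, c', -, hne⟩
  cases c'
  · exact hne ness_f
  · exact hne ness_t
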